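/- arXiv:2003.12308 — 2 statements merged into one kernel-verified Lean document; each statement's English description precedes it below -/
import Mathlib

section
/- Let n ≥ 2 be even, m ≥ 1, and let F : 𝔽₂ⁿ → 𝔽₂ᵐ be a bent function. Then every codeword c ∈ C(F) has weight wt(c) ∈ {0, 2^{n−1} − 2^{n/2−1}, 2^{n−1}, 2^{n−1} + 2^{n/2−1}, 2ⁿ}; moreover the codewords of weight 2^{n−1} − 2^{n/2−1} or 2^{n−1} + 2^{n/2−1} are exactly those of the form x ↦ ε ⊕ ⟨a,x⟩ ⊕ ⟨b,F(x)⟩ with b ≠ 0. -/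
open Finset Function

/-- The vector space `𝔽₂ⁿ`. -/
abbrev BV (n : ℕ) := Fin n → ZMod 2

/-- The standard dot product `⟨u,v⟩ = Σᵢ uᵢ vᵢ` on `𝔽₂ⁿ`. -/
def bdot {n : ℕ} (u v : BV n) : ZMod 2 := ∑ i, u i * v i

/-- The Walsh coefficient `W_F(a,b) = Σ_x (−1)^{⟨b,F(x)⟩ ⊕ ⟨a,x⟩}` of an `(n,m)`-function. -/
def walsh {n m : ℕ} (F : BV n → BV m) (a : BV n) (b : BV m) : ℤ :=
  ∑ x : BV n, (-1 : ℤ) ^ ((bdot b (F x) + bdot a x).val)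

/-- An `(n,m)`-function is bent if all Walsh coefficients `W_F(a,b)`, `b ≠ 0`, equal `±2^{n/2}`. -/
def IsBent {n m : ℕ} (F : BV n → BV m) : Prop :=
  ∀ (a : BV n) (b : BV m), b ≠ 0 →
    walsh F a b = 2 ^ (n / 2) ∨ walsh F a b = -2 ^ (n / 2)

/-- A map `𝔽₂ⁿ → 𝔽₂ᵐ` is affine if it is a linear map followed by a translation. -/
def IsAffineF {n m : ℕ} (A : BV n → BV m) : Prop :=
  ∃ (L : BV n →ₗ[ZMod 2] BV m) (t : BV m), ∀ x, A x = L x + t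

/-- Extended-affine equivalence of `(n,m)`-functions: `F = A₁ ∘ F' ∘ A₂ + A₃` with `A₁`
a linear automorphism of `𝔽₂ᵐ`, `A₂` an affine automorphism of `𝔽₂ⁿ`, `A₃` affine. -/
def EAequiv {n m : ℕ} (F F' : BV n → BV m) : Prop :=
  ∃ (A₁ : BV m →ₗ[ZMod 2] BV m) (A₂ : BV n → BV n) (A₃ : BV n → BV m),
    Bijective A₁ ∧ IsAffineF A₂ ∧ Bijective A₂ ∧ IsAffineF A₃ ∧
    ∀ x, F x = A₁ (F' (A₂ x)) + A₃ x

/-- A codeword of the code `C(F)`: `x ↦ ε ⊕ ⟨a,x⟩ ⊕ ⟨b,F(x)⟩`. -/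
def codeword {n m : ℕ} (F : BV n → BV m) (ε : ZMod 2) (a : BV n) (b : BV m) :
    BV n → ZMod 2 :=
  fun x => ε + bdot a x + bdot b (F x)

/-- The linear code `C(F) = { x ↦ ε ⊕ ⟨a,x⟩ ⊕ ⟨b,F(x)⟩ }` of length `2ⁿ`. -/
def code {n m : ℕ} (F : BV n → BV m) : Set (BV n → ZMod 2) :=
  { c | ∃ (ε : ZMod 2) (a : BV n) (b : BV m), c = codeword F ε a b }

/-- The weight of a codeword: the size of its support. -/
def wtc {n : ℕ} (c : BV n → ZMod 2) : ℕ :=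
  (Finset.univ.filter (fun x => c x = 1)).card

/-!
Counting signs, `2ⁿ − 2·wt(c) = Σₓ (−1)^{c(x)}`, and for `c = ε ⊕ ⟨a,x⟩ ⊕ ⟨b,F(x)⟩` this sum
is `(−1)^ε W_F(a,b)`. For `b ≠ 0` bentness gives `W_F(a,b) = ±2^{n/2}`, hence the weights
`2^{n−1} ∓ 2^{n/2−1}`. For `b = 0` the sum is that of the character `x ↦ (−1)^{⟨a,x⟩}` of `𝔽₂ⁿ`,
so it is `0` if `a ≠ 0` and `±2ⁿ` if `a = 0`, giving the weights `2^{n−1}`, `0` and `2ⁿ`.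
-/

lemma ZMod.neg_one_pow_val_eq_ite (u : ZMod 2) :
    (-1 : ℤ) ^ u.val = 1 - 2 * if u = 1 then 1 else 0 := by
  revert u; decide

lemma ZMod.neg_one_pow_val_add (u v : ZMod 2) :
    (-1 : ℤ) ^ (u + v).val = (-1) ^ u.val * (-1) ^ v.val := by
  revert u v; decide

theorem sum_neg_one_pow_val_eq {α : Type*} [Fintype α] (c : α → ZMod 2) :
    ∑ x, (-1 : ℤ) ^ (c x).val = Fintype.card α - 2 * #{x | c x = 1} := by
  simp only [ZMod.neg_one_pow_val_eq_ite, sum_sub_distrib, ← mul_sum, sum_boole, sum_const,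
    card_univ, nsmul_eq_mul, mul_one]

theorem sum_neg_one_pow_val_eq_zero {G : Type*} [AddGroup G] [Fintype G] (ℓ : G →+ ZMod 2)
    (hℓ : ℓ ≠ 0) : ∑ x, (-1 : ℤ) ^ (ℓ x).val = 0 := by
  let ψ : AddChar G ℤ := (AddChar.zmodChar 2 (by norm_num : (-1 : ℤ) ^ 2 = 1)).compAddMonoidHom ℓ
  obtain ⟨x, hx⟩ : ∃ x, ℓ x ≠ 0 := by simpa [DFunLike.ext_iff] using hℓ
  refine AddChar.sum_eq_zero_of_ne_one (ψ := ψ) (AddChar.ne_one_iff.2 ⟨x, ?_⟩)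
  show (-1 : ℤ) ^ (ℓ x).val ≠ 1
  generalize ℓ x = u at hx
  revert u; decide

lemma bdot_zero_left {n : ℕ} (v : BV n) : bdot 0 v = 0 :=
  zero_dotProduct v

lemma walsh_zero_right_of_ne_zero {n m : ℕ} (F : BV n → BV m) {a : BV n} (ha : a ≠ 0) :
    walsh F a 0 = 0 := by
  let ℓ : BV n →+ ZMod 2 := AddMonoidHom.mk' (bdot a) (dotProduct_add a)
  obtain ⟨i, hi⟩ : ∃ i, a i ≠ 0 := Function.ne_iff.1 ha
  have hℓi : ℓ (Pi.single i 1) ≠ 0 := by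
    show a ⬝ᵥ Pi.single i 1 ≠ 0
    rwa [dotProduct_single, mul_one]
  simp only [walsh, bdot_zero_left, zero_add]
  exact sum_neg_one_pow_val_eq_zero ℓ fun h => hℓi (by rw [h]; rfl)

lemma walsh_zero_zero {n m : ℕ} (F : BV n → BV m) : walsh F 0 0 = 2 ^ n := by
  simp [walsh, bdot_zero_left]

lemma sum_neg_one_pow_codeword {n m : ℕ} (F : BV n → BV m) (ε : ZMod 2) (a : BV n)
    (b : BV m) : ∑ x, (-1 : ℤ) ^ (codeword F ε a b x).val = (-1) ^ ε.val * walsh F a b := by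
  simp only [codeword, walsh, mul_sum, add_assoc, add_comm (bdot a _),
    ZMod.neg_one_pow_val_add ε]

lemma two_mul_wtc_codeword {n m : ℕ} (F : BV n → BV m) (ε : ZMod 2) (a : BV n) (b : BV m) :
    2 * (wtc (codeword F ε a b) : ℤ) = 2 ^ n - (-1) ^ ε.val * walsh F a b := by
  have h := sum_neg_one_pow_val_eq (codeword F ε a b)
  rw [sum_neg_one_pow_codeword] at h
  simp only [h, wtc, Fintype.card_fun, ZMod.card, Fintype.card_fin]
  push_cast
  ring

lemma wtc_codeword_of_isBent {n m : ℕ} (hn : 2 ≤ n) {F : BV n → BV m} (hF : IsBent F)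
    (ε : ZMod 2) (a : BV n) {b : BV m} (hb : b ≠ 0) :
    wtc (codeword F ε a b) = 2 ^ (n - 1) - 2 ^ (n / 2 - 1) ∨
      wtc (codeword F ε a b) = 2 ^ (n - 1) + 2 ^ (n / 2 - 1) := by
  have h := two_mul_wtc_codeword F ε a b
  rw [← mul_pow_sub_one (by omega : n ≠ 0)] at h
  have hQ : (2 : ℤ) ^ (n / 2) = 2 * 2 ^ (n / 2 - 1) := (mul_pow_sub_one (by omega) 2).symm
  have hQN : 2 ^ (n / 2 - 1) ≤ 2 ^ (n - 1) := Nat.pow_le_pow_right two_pos (by omega)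
  zify [hQN]
  rcases neg_one_pow_eq_or ℤ ε.val with hε | hε <;> rcases hF a b hb with hW | hW <;>
    rw [hε, hW, hQ] at h <;> omega

lemma wtc_codeword_zero_right {n m : ℕ} (hn : n ≠ 0) (F : BV n → BV m) (ε : ZMod 2)
    (a : BV n) :
    wtc (codeword F ε a 0) = 0 ∨ wtc (codeword F ε a 0) = 2 ^ (n - 1) ∨
      wtc (codeword F ε a 0) = 2 ^ n := by
  have h := two_mul_wtc_codeword F ε a 0
  by_cases ha : a = 0
  · subst ha
    rw [walsh_zero_zero] at h
    rcases neg_one_pow_eq_or ℤ ε.val with hε | hε <;> rw [hε] at h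
    · left; omega
    · right; right; zify; omega
  · rw [walsh_zero_right_of_ne_zero F ha, ← mul_pow_sub_one hn] at h
    right; left; zify; omega

theorem code_of_bent_weight_distribution_general
    {n m : ℕ} (hn : 2 ≤ n)
    (F : BV n → BV m) (hF : IsBent F) :
    ∀ c ∈ code F,
      (wtc c = 0 ∨ wtc c = 2 ^ (n - 1) - 2 ^ (n / 2 - 1) ∨ wtc c = 2 ^ (n - 1) ∨
        wtc c = 2 ^ (n - 1) + 2 ^ (n / 2 - 1) ∨ wtc c = 2 ^ n) ∧
      ((wtc c = 2 ^ (n - 1) - 2 ^ (n / 2 - 1) ∨ wtc c = 2 ^ (n - 1) + 2 ^ (n / 2 - 1)) ↔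
        ∃ (ε : ZMod 2) (a : BV n) (b : BV m), b ≠ 0 ∧ c = codeword F ε a b) := by
  have hQ : 0 < 2 ^ (n / 2 - 1) := by positivity
  have hQN : 2 ^ (n / 2 - 1) < 2 ^ (n - 1) := Nat.pow_lt_pow_right one_lt_two (by omega)
  have h2N : 2 ^ n = 2 * 2 ^ (n - 1) := (mul_pow_sub_one (by omega) 2).symm
  rintro c ⟨ε, a, b, rfl⟩
  refine ⟨?_, fun hw => ?_, fun ⟨ε', a', b', hb', heq⟩ =>
    heq ▸ wtc_codeword_of_isBent hn hF ε' a' hb'⟩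
  · by_cases hb : b = 0
    · subst hb
      have := wtc_codeword_zero_right (by omega) F ε a
      tauto
    · have := wtc_codeword_of_isBent hn hF ε a hb
      tauto
  · by_cases hb : b = 0
    · subst hb
      have := wtc_codeword_zero_right (by omega) F ε a
      omega
    · exact ⟨ε, a, b, hb, rfl⟩

/-- For an `(n,m)`-bent function `F`, every codeword of `C(F)` has weight in
`{0, 2^{n−1} − 2^{n/2−1}, 2^{n−1}, 2^{n−1} + 2^{n/2−1}, 2ⁿ}`, and the codewords of weight
`2^{n−1} ∓ 2^{n/2−1}` are exactly those of the form `x ↦ ε ⊕ ⟨a,x⟩ ⊕ ⟨b,F(x)⟩` with `b ≠ 0`. -/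
theorem code_of_bent_weight_distribution
    {n m : ℕ} (hn : 2 ≤ n) (hev : Even n) (hm : 1 ≤ m)
    (F : BV n → BV m) (hF : IsBent F) :
    ∀ c ∈ code F,
      (wtc c = 0 ∨ wtc c = 2 ^ (n - 1) - 2 ^ (n / 2 - 1) ∨ wtc c = 2 ^ (n - 1) ∨
        wtc c = 2 ^ (n - 1) + 2 ^ (n / 2 - 1) ∨ wtc c = 2 ^ n) ∧
      ((wtc c = 2 ^ (n - 1) - 2 ^ (n / 2 - 1) ∨ wtc c = 2 ^ (n - 1) + 2 ^ (n / 2 - 1)) ↔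
        ∃ (ε : ZMod 2) (a : BV n) (b : BV m), b ≠ 0 ∧ c = codeword F ε a b) :=
  code_of_bent_weight_distribution_general hn F hF
end

section
/- Let n be even, m ≥ 1, let F, F' : 𝔽₂ⁿ → 𝔽₂ᵐ be extended-affine equivalent bent functions, and let G : 𝔽₂ⁿ → 𝔽₂^{m+1} be a bent function. Then the sets { f : 𝔽₂ⁿ → 𝔽₂ | f is affine-free and (F,f) is extended-affine equivalent to G } and { f : 𝔽₂ⁿ → 𝔽₂ | f is affine-free and (F',f) is extended-affine equivalent to G } have the same cardinality. -/
open Finset Function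

/-- The extension of an `(n,m)`-function `F` by a Boolean function `f`:
`x ↦ (F(x), f(x)) : 𝔽₂ⁿ → 𝔽₂^{m+1}`. -/
def extendF {n m : ℕ} (F : BV n → BV m) (f : BV n → ZMod 2) : BV n → BV (m + 1) :=
  fun x => Fin.snoc (F x) (f x)

/-- A Boolean function is affine-free (no constant or degree-one terms in its ANF) iff
`f(0) = 0` and `f(eᵢ) = 0` for all standard basis vectors `eᵢ`. -/
def AffineFree {n : ℕ} (f : BV n → ZMod 2) : Prop :=
  f 0 = 0 ∧ ∀ i : Fin n, f (Pi.single i 1) = 0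

/-! An EA-equivalence `F = A₁ ∘ F' ∘ A₂ + A₃` lifts (extend `A₁` by the identity on the last
coordinate) to an EA-equivalence between `(F, f ∘ A₂ + ℓ)` and `(F', f)` for every affine `ℓ`.
Every Boolean function differs from an affine-free one by an affine function, and an affine
function that is affine-free vanishes. So sending a friend `f` of `F'` to the affine-free
normalization of `f ∘ A₂` is an injection into the friends of `F` (two friends with the same
image differ by an affine-free affine function), and by symmetry the counts agree. -/

section

variable {n m : ℕ}

theorem isAffineF_iff {A : BV n → BV m} :
    IsAffineF A ↔ ∃ φ : BV n →ᵃ[ZMod 2] BV m, ⇑φ = A := by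
  constructor
  · rintro ⟨L, t, hA⟩
    exact ⟨L.toAffineMap + AffineMap.const _ _ t, funext fun x => by simp [hA]⟩
  · rintro ⟨φ, rfl⟩
    exact ⟨φ.linear, φ 0, fun x => congrFun φ.decomp x⟩

theorem eAequiv_iff {F F' : BV n → BV m} :
    EAequiv F F' ↔ ∃ (A₁ : BV m ≃ₗ[ZMod 2] BV m) (A₂ : BV n ≃ᵃ[ZMod 2] BV n)
      (A₃ : BV n →ᵃ[ZMod 2] BV m), ∀ x, F x = A₁ (F' (A₂ x)) + A₃ x := by
  constructor
  · rintro ⟨A₁, A₂, A₃, hA₁, hA₂, hA₂b, hA₃, hF⟩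
    obtain ⟨φ₂, rfl⟩ := isAffineF_iff.mp hA₂
    obtain ⟨φ₃, rfl⟩ := isAffineF_iff.mp hA₃
    exact ⟨.ofBijective A₁ hA₁, .ofBijective hA₂b, φ₃, hF⟩
  · rintro ⟨A₁, A₂, A₃, hF⟩
    exact ⟨A₁, A₂, A₃, A₁.bijective, isAffineF_iff.mpr ⟨A₂.toAffineMap, rfl⟩, A₂.bijective,
      isAffineF_iff.mpr ⟨A₃, rfl⟩, hF⟩

theorem EAequiv.symm {F F' : BV n → BV m} (h : EAequiv F F') : EAequiv F' F := by
  obtain ⟨A₁, A₂, A₃, hF⟩ := eAequiv_iff.mp h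
  refine eAequiv_iff.mpr ⟨A₁.symm, A₂.symm,
    -(A₁.symm.toLinearMap.toAffineMap.comp (A₃.comp A₂.symm.toAffineMap)), fun y => ?_⟩
  simp [hF]

theorem EAequiv.trans {F F' F'' : BV n → BV m} (h : EAequiv F F') (h' : EAequiv F' F'') :
    EAequiv F F'' := by
  obtain ⟨A₁, A₂, A₃, hF⟩ := eAequiv_iff.mp h
  obtain ⟨B₁, B₂, B₃, hF'⟩ := eAequiv_iff.mp h'
  refine eAequiv_iff.mpr ⟨B₁.trans A₁, A₂.trans B₂,
    A₁.toLinearMap.toAffineMap.comp (B₃.comp A₂.toAffineMap) + A₃, fun x => ?_⟩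
  simp [hF, hF', add_assoc]

def Fin.snocLinearEquiv (R : Type*) [Semiring R] {k : ℕ} (M : Fin (k + 1) → Type*)
    [∀ i, AddCommMonoid (M i)] [∀ i, Module R (M i)] :
    (M (Fin.last k) × Π i, M (Fin.castSucc i)) ≃ₗ[R] Π i, M i where
  __ := Fin.snocEquiv M
  map_add' x y := funext <| Fin.lastCases (by simp) (by simp)
  map_smul' c x := funext <| Fin.lastCases (by simp) (by simp)

theorem extendF_apply (F : BV n → BV m) (f : BV n → ZMod 2) (x : BV n) :
    extendF F f x = Fin.snocLinearEquiv (ZMod 2) (fun _ => ZMod 2) (f x, F x) := rfl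

theorem eAequiv_extendF_comp_add {F F' : BV n → BV m} (A₁ : BV m ≃ₗ[ZMod 2] BV m)
    (A₂ : BV n ≃ᵃ[ZMod 2] BV n) (A₃ : BV n →ᵃ[ZMod 2] BV m)
    (hF : ∀ x, F x = A₁ (F' (A₂ x)) + A₃ x) (g : BV n → ZMod 2)
    (ℓ : BV n →ᵃ[ZMod 2] ZMod 2) :
    EAequiv (extendF F fun x => g (A₂ x) + ℓ x) (extendF F' g) := by
  let e := Fin.snocLinearEquiv (ZMod 2) (fun _ : Fin (m + 1) => ZMod 2)
  refine eAequiv_iff.mpr ⟨e.symm.trans (((LinearEquiv.refl _ _).prodCongr A₁).trans e), A₂,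
    e.toLinearMap.toAffineMap.comp (ℓ.prod A₃), fun x => ?_⟩
  simp only [extendF_apply, LinearEquiv.trans_apply]
  simp [e, hF, ← map_add]

theorem AffineFree.sub {f g : BV n → ZMod 2} (hf : AffineFree f) (hg : AffineFree g) :
    AffineFree (f - g) :=
  ⟨by simp [hf.1, hg.1], fun i => by simp [hf.2 i, hg.2 i]⟩

theorem AffineFree.eq_zero_of_affineMap (φ : BV n →ᵃ[ZMod 2] ZMod 2) (hφ : AffineFree φ) :
    ⇑φ = 0 := by
  have hlinear : φ.linear = 0 := (Pi.basisFun (ZMod 2) (Fin n)).ext fun i => by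
    simpa [hφ.1, hφ.2 i] using φ.linearMap_vsub (Pi.single i 1) 0
  rw [φ.decomp, hlinear, hφ.1]
  rfl

theorem exists_affineFree_add_affineMap (h : BV n → ZMod 2) :
    ∃ ℓ : BV n →ᵃ[ZMod 2] ZMod 2, AffineFree fun x => h x + ℓ x := by
  let b := Pi.basisFun (ZMod 2) (Fin n)
  let L := b.constr (ZMod 2) fun i => h 0 - h (Pi.single i 1)
  refine ⟨L.toAffineMap - AffineMap.const _ _ (h 0), ?_, fun i => ?_⟩
  · simp only [AffineMap.coe_sub, Pi.sub_apply, LinearMap.coe_toAffineMap, map_zero,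
      AffineMap.const_apply]
    ring
  · have hL : L (Pi.single i 1) = h 0 - h (Pi.single i 1) := by
      simpa only [b, Pi.basisFun_apply] using
        b.constr_basis (ZMod 2) (fun i => h 0 - h (Pi.single i 1)) i
    simp only [AffineMap.coe_sub, Pi.sub_apply, LinearMap.coe_toAffineMap, hL,
      AffineMap.const_apply]
    ring

theorem exists_injective_affineFree_friends {F F' : BV n → BV m} (h : EAequiv F F')
    (G : BV n → BV (m + 1)) :
    ∃ Φ : {f : BV n → ZMod 2 // AffineFree f ∧ EAequiv (extendF F' f) G} →
      {f : BV n → ZMod 2 // AffineFree f ∧ EAequiv (extendF F f) G}, Injective Φ := by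
  obtain ⟨A₁, A₂, A₃, hF⟩ := eAequiv_iff.mp h
  choose ℓ hℓ using fun f : BV n → ZMod 2 => exists_affineFree_add_affineMap fun x => f (A₂ x)
  refine ⟨fun f => ⟨_, hℓ f, (eAequiv_extendF_comp_add A₁ A₂ A₃ hF f (ℓ f)).trans f.2.2⟩,
    fun f₁ f₂ heq => ?_⟩
  have hdiff : (f₁ : BV n → ZMod 2) - f₂ = ⇑((ℓ f₂ - ℓ f₁).comp A₂.symm.toAffineMap) := by
    funext y
    have := congrFun (congrArg Subtype.val heq) (A₂.symm y)
    simp only [AffineEquiv.apply_symm_apply] at this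
    simp only [Pi.sub_apply, AffineMap.coe_comp, AffineMap.coe_sub, comp_apply,
      AffineEquiv.coe_toAffineMap]
    linear_combination this
  have hzero := AffineFree.eq_zero_of_affineMap _ (hdiff ▸ f₁.2.1.sub f₂.2.1)
  exact Subtype.ext (sub_eq_zero.mp (hdiff.trans hzero))

end

theorem card_bent_friends_invariant_general
    {n m : ℕ}
    (F F' : BV n → BV m) (hFF' : EAequiv F F')
    (G : BV n → BV (m + 1)) :
    Nat.card {f : BV n → ZMod 2 // AffineFree f ∧ EAequiv (extendF F f) G} =
      Nat.card {f : BV n → ZMod 2 // AffineFree f ∧ EAequiv (extendF F' f) G} := by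
  obtain ⟨Φ, hΦ⟩ := exists_injective_affineFree_friends hFF' G
  obtain ⟨Ψ, hΨ⟩ := exists_injective_affineFree_friends hFF'.symm G
  exact le_antisymm (Nat.card_le_card_of_injective Ψ hΨ) (Nat.card_le_card_of_injective Φ hΦ)

/-- If `F, F'` are EA-equivalent `(n,m)`-bent functions and `G` is an `(n,m+1)`-bent
function, then `F` and `F'` have the same number of affine-free bent friends leading to
the equivalence class of `G`. -/
theorem card_bent_friends_invariant
    {n m : ℕ} (hev : Even n) (hm : 1 ≤ m)
    (F F' : BV n → BV m) (hF : IsBent F) (hF' : IsBent F') (hFF' : EAequiv F F')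
    (G : BV n → BV (m + 1)) (hG : IsBent G) :
    Nat.card {f : BV n → ZMod 2 // AffineFree f ∧ EAequiv (extendF F f) G} =
      Nat.card {f : BV n → ZMod 2 // AffineFree f ∧ EAequiv (extendF F' f) G} :=
  card_bent_friends_invariant_general F F' hFF' G
end
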